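/- For every Borel probability measure ρ on ℝ^d and every θ ∈ [0,1], one has C_∞(θ ρ) ≤ θ² C_∞(ρ). -/

import Mathlib

open MeasureTheory ENNReal Filter Topology
open scoped ZeroAtInfty

noncomputable section

/-- The pairwise interaction cost `c_N` on `(ℝ^d)^N`. -/
def pairCost (d : ℕ) (ℓ : ℝ → ℝ≥0∞) (N : ℕ)
    (x : Fin N → EuclideanSpace ℝ (Fin d)) : ℝ≥0∞ :=
  (2 / ((N : ℝ≥0∞) * ((N : ℝ≥0∞) - 1))) *
    ∑ i : Fin N, ∑ j : Fin N, if i < j then ℓ (dist (x i) (x j)) else 0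

/-- The set `Π_N(ρ)` of multimarginal transport plans. -/
def couplings (d : ℕ) (N : ℕ) (ρ : Measure (EuclideanSpace ℝ (Fin d))) :
    Set (Measure (Fin N → EuclideanSpace ℝ (Fin d))) :=
  {P | IsProbabilityMeasure P ∧ ∀ i : Fin N, P.map (fun x => x i) = ρ}

/-- The multimarginal optimal transport cost `C_N(ρ)`. -/
def CN (d : ℕ) (ℓ : ℝ → ℝ≥0∞) (N : ℕ) (ρ : Measure (EuclideanSpace ℝ (Fin d))) : ℝ≥0∞ :=
  ⨅ P ∈ couplings d N ρ, ∫⁻ x, pairCost d ℓ N x ∂P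

/-- `S_N v (x) = (1/N) ∑ v(x_j)`. -/
def SN (d : ℕ) (N : ℕ) (v : EuclideanSpace ℝ (Fin d) → ℝ)
    (x : Fin N → EuclideanSpace ℝ (Fin d)) : ℝ :=
  (∑ i, v (x i)) / N

/-- The dual functional `M_N(v) = sup_x (S_N v (x) - c_N(x))`, as an extended real. -/
def MN (d : ℕ) (ℓ : ℝ → ℝ≥0∞) (N : ℕ) (v : EuclideanSpace ℝ (Fin d) → ℝ) : EReal :=
  ⨆ x : Fin N → EuclideanSpace ℝ (Fin d),
    ((SN d N v x : ℝ) : EReal) - ((pairCost d ℓ N x : ℝ≥0∞) : EReal)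

/-- `M_∞(v) = inf_{N ≥ 2} M_N(v)`. -/
def Minf (d : ℕ) (ℓ : ℝ → ℝ≥0∞) (v : EuclideanSpace ℝ (Fin d) → ℝ) : EReal :=
  ⨅ N : ℕ, ⨅ _ : 2 ≤ N, MN d ℓ N v

/-- The relaxed multimarginal cost `overline{C_N}`, defined by biconjugation. -/
def relCN (d : ℕ) (ℓ : ℝ → ℝ≥0∞) (N : ℕ)
    (ρ : Measure (EuclideanSpace ℝ (Fin d))) : EReal :=
  ⨆ v : C₀(EuclideanSpace ℝ (Fin d), ℝ),
    ((∫ x, v x ∂ρ : ℝ) : EReal) - MN d ℓ N (fun x => v x)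

/-- The limit functional `C_∞`, Fenchel conjugate of `M_∞`. -/
def Cinf (d : ℕ) (ℓ : ℝ → ℝ≥0∞) (ρ : Measure (EuclideanSpace ℝ (Fin d))) : EReal :=
  ⨆ v : C₀(EuclideanSpace ℝ (Fin d), ℝ),
    ((∫ x, v x ∂ρ : ℝ) : EReal) - Minf d ℓ (fun x => v x)

/-- The direct interaction energy `D(ρ) = ∬ ℓ(|x-y|) dρ dρ`. -/
def Denergy (d : ℕ) (ℓ : ℝ → ℝ≥0∞) (ρ : Measure (EuclideanSpace ℝ (Fin d))) : ℝ≥0∞ :=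
  ∫⁻ p : EuclideanSpace ℝ (Fin d) × EuclideanSpace ℝ (Fin d),
    ℓ (dist p.1 p.2) ∂(ρ.prod ρ)

/-- The convolution potential `u_ρ(x) = ∫ ℓ(|x-y|) dρ(y)`. -/
def uPot (d : ℕ) (ℓ : ℝ → ℝ≥0∞) (ρ : Measure (EuclideanSpace ℝ (Fin d)))
    (x : EuclideanSpace ℝ (Fin d)) : ℝ≥0∞ :=
  ∫⁻ y, ℓ (dist x y) ∂ρ

/-- `n_ε(B)`: the maximal cardinality of an `ε`-separated subset of `B`. -/
def packNum (d : ℕ) (ε : ℝ) (B : Set (EuclideanSpace ℝ (Fin d))) : ℕ :=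
  sSup {n : ℕ | ∃ s : Finset (EuclideanSpace ℝ (Fin d)), ↑s ⊆ B ∧ s.card = n ∧
    ∀ x ∈ s, ∀ y ∈ s, x ≠ y → ε ≤ dist x y}

/-- The cube `Q_a = [-a/2, a/2]^d`. -/
def cube (d : ℕ) (a : ℝ) : Set (EuclideanSpace ℝ (Fin d)) :=
  {x | ∀ i, |x i| ≤ a / 2}

/-- The packing constant `γ_d = inf_{k ≥ 1} S(Q_k)/k^d`. -/
def gammaPack (d : ℕ) : ℝ :=
  ⨅ k : ℕ, (packNum d 1 (cube d ((k + 1 : ℕ) : ℝ)) : ℝ) / ((k + 1 : ℕ) : ℝ) ^ d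



/-!
Writing `v = θ • w`, the claim reduces to `θ² M_∞(w) ≤ M_∞(θ w)`. Take `K = ⌊θ N⌋` points `y`
nearly optimal for `M_K(w)` and add `N - K` points so far away that `w` and `ℓ` are negligible on
them and on their distances to `y`. Then `S_N(θ w) ≈ θ (K / N) S_K w(y) ≈ θ² S_K w(y)`, while only
the pairs inside `y` cost anything, with weight `K (K - 1) / (N (N - 1)) ≤ θ²` relative to `c_K`.
This gives the bound for `M_N` with `N` large, hence for all `N`, since `M_N` is nonincreasing in
`N`. The same far-away construction with `K = 0` gives `M_N(v) ≥ 0`, so `M_∞(w)` is finite.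
-/

theorem EReal.coe_sub_coe_ennreal_ofReal (a : ℝ) {c : ℝ} (hc : 0 ≤ c) :
    (a : EReal) - (ENNReal.ofReal c : EReal) = ((a - c : ℝ) : EReal) := by
  rw [EReal.coe_ennreal_ofReal, max_eq_left hc, EReal.coe_sub]

theorem ZeroAtInftyContinuousMap.exists_abs_le_of_le_norm {E : Type*}
    [NormedAddCommGroup E] [ProperSpace E] (v : C₀(E, ℝ)) {ε : ℝ} (hε : 0 < ε) :
    ∃ R, ∀ x, R ≤ ‖x‖ → |v x| ≤ ε := by
  have hv : Tendsto v (comap norm atTop) (𝓝 0) := by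
    rw [comap_norm_atTop, Metric.cobounded_eq_cocompact]
    exact v.zero_at_infty'
  obtain ⟨R, -, hR⟩ :=
    (atTop_basis.comap norm).eventually_iff.1 (hv.eventually (Metric.closedBall_mem_nhds 0 hε))
  exact ⟨R, fun x hx => by simpa using hR hx⟩

theorem Fin.sum_succAbove_eq_sum_ite {M : Type*} [AddCommMonoid M] {N : ℕ} (m : Fin (N + 1))
    (h : Fin (N + 1) → M) : ∑ i : Fin N, h (m.succAbove i) = ∑ a, if a ≠ m then h a else 0 := by
  have : Finset.univ.filter (· ≠ m) = Finset.univ.image m.succAbove := by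
    rw [Fin.image_succAbove_univ]; ext; simp
  rw [← Finset.sum_filter, this,
    Finset.sum_image fun _ _ _ _ hij => Fin.succAbove_right_injective hij]

theorem Fin.sum_sum_succAbove {M : Type*} [AddCommMonoid M] {N : ℕ}
    (g : Fin (N + 1) → Fin (N + 1) → M) (hg : ∀ a, g a a = 0) :
    ∑ m : Fin (N + 1), ∑ i : Fin N, ∑ j : Fin N, g (m.succAbove i) (m.succAbove j) =
      (N - 1) • ∑ a, ∑ b, g a b := by
  have hcount : ∀ a b, ∑ m, (if a ≠ m ∧ b ≠ m then g a b else 0) = (N - 1) • g a b := by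
    intro a b
    rcases eq_or_ne a b with rfl | hab
    · simp [hg]
    rw [← Finset.sum_filter, Finset.sum_const]
    congr 1
    have : Finset.univ.filter (fun m => a ≠ m ∧ b ≠ m) = {a, b}ᶜ := by ext; simp [eq_comm]
    rw [this, Finset.card_compl, Finset.card_pair hab, Fintype.card_fin]
    omega
  calc ∑ m : Fin (N + 1), ∑ i : Fin N, ∑ j : Fin N, g (m.succAbove i) (m.succAbove j)
      = ∑ m, ∑ a, ∑ b, if a ≠ m ∧ b ≠ m then g a b else 0 := by
        refine Finset.sum_congr rfl fun m _ => ?_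
        rw [Fin.sum_succAbove_eq_sum_ite m (fun a => ∑ j : Fin N, g a (m.succAbove j))]
        simp only [Fin.sum_succAbove_eq_sum_ite m (g _), ite_and, Finset.sum_ite_irrel,
          Finset.sum_const_zero]
    _ = ∑ a, ∑ b, ∑ m, if a ≠ m ∧ b ≠ m then g a b else 0 := by
        rw [Finset.sum_comm]
        exact Finset.sum_congr rfl fun a _ => Finset.sum_comm
    _ = (N - 1) • ∑ a, ∑ b, g a b := by simp only [hcount, Finset.smul_sum]

theorem sum_sum_ite_le {ι κ : Type*} [Fintype ι] [Fintype κ] (p : ι → κ → Prop)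
    [∀ i j, Decidable (p i j)] {f : ι → κ → ℝ≥0∞} {e : ℝ≥0∞} (h : ∀ i j, p i j → f i j ≤ e) :
    ∑ i, ∑ j, (if p i j then f i j else 0) ≤ Fintype.card ι * Fintype.card κ * e := by
  calc ∑ i, ∑ j, (if p i j then f i j else 0) ≤ ∑ _i : ι, ∑ _j : κ, e := by
        gcongr with i _ j _
        split_ifs with hij
        exacts [h i j hij, zero_le]
    _ = Fintype.card ι * Fintype.card κ * e := by simp [mul_assoc]

theorem one_le_abs_natCast_sub_natCast {i j : ℕ} (h : i ≠ j) : (1 : ℝ) ≤ |(i : ℝ) - j| := by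
  have : (1 : ℤ) ≤ |(i : ℤ) - j| := Int.one_le_abs (sub_ne_zero.2 (by exact_mod_cast h))
  exact_mod_cast this

section FarPoints

variable {E : Type*} [NormedAddCommGroup E] [NormedSpace ℝ E] [Nontrivial E]

theorem exists_far_points {K : ℕ} (y : Fin K → E) (L : ℕ) (R : ℝ) :
    ∃ z : Fin L → E, (∀ j, R ≤ ‖z j‖) ∧ (∀ i j, R ≤ dist (y i) (z j)) ∧
      ∀ i j, i ≠ j → R ≤ dist (z i) (z j) := by
  obtain ⟨u, hu⟩ := exists_norm_eq E zero_le_one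
  set r := max R 0
  set B := ∑ i, ‖y i‖
  have hB : 0 ≤ B := Finset.sum_nonneg fun i _ => norm_nonneg _
  have hnorm : ∀ j : Fin L, ‖((j + 1 : ℝ) * r + B) • u‖ = (j + 1) * r + B := fun j => by
    rw [norm_smul, hu, mul_one, Real.norm_of_nonneg (by positivity)]
  refine ⟨fun j => ((j + 1 : ℝ) * r + B) • u, fun j => ?_, fun i j => ?_, fun i j hij => ?_⟩
  · rw [hnorm]
    nlinarith [le_max_left R 0, le_max_right R 0, (Nat.cast_nonneg (j : ℕ) : (0 : ℝ) ≤ _)]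
  · have : ‖y i‖ ≤ B := Finset.single_le_sum (fun i _ => norm_nonneg (y i)) (Finset.mem_univ i)
    calc R ≤ (j + 1) * r + B - ‖y i‖ := by
          nlinarith [le_max_left R 0, le_max_right R 0, (Nat.cast_nonneg (j : ℕ) : (0 : ℝ) ≤ _)]
      _ = ‖((j + 1 : ℝ) * r + B) • u‖ - ‖y i‖ := by rw [hnorm]
      _ ≤ dist (y i) (((j + 1 : ℝ) * r + B) • u) := by
          rw [dist_comm, dist_eq_norm]; exact norm_sub_norm_le _ _
  · rw [dist_eq_norm, ← sub_smul, norm_smul, hu, mul_one, Real.norm_eq_abs,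
      show ((i : ℝ) + 1) * r + B - ((j + 1) * r + B) = ((i : ℕ) - (j : ℕ) : ℝ) * r by ring,
      abs_mul, abs_of_nonneg (le_max_right R 0)]
    have := one_le_abs_natCast_sub_natCast (Fin.val_injective.ne hij)
    nlinarith [le_max_left R 0, le_max_right R 0]

theorem exists_far_config [ProperSpace E] {ℓ : ℝ → ℝ≥0∞} (hℓ : Tendsto ℓ atTop (𝓝 0))
    (v : C₀(E, ℝ)) {K : ℕ} (y : Fin K → E) (L : ℕ) {ε : ℝ} (hε : 0 < ε) :
    ∃ z : Fin L → E, (∀ j, |v (z j)| ≤ ε) ∧ (∀ i j, ℓ (dist (y i) (z j)) ≤ ENNReal.ofReal ε) ∧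
      ∀ i j, i ≠ j → ℓ (dist (z i) (z j)) ≤ ENNReal.ofReal ε := by
  obtain ⟨R₁, hR₁⟩ := eventually_atTop.1 (hℓ.eventually (Iic_mem_nhds (ofReal_pos.2 hε)))
  obtain ⟨R₂, hR₂⟩ := v.exists_abs_le_of_le_norm hε
  obtain ⟨z, hz, hyz, hzz⟩ := exists_far_points y L (max R₁ R₂)
  exact ⟨z, fun j => hR₂ _ ((le_max_right _ _).trans (hz j)),
    fun i j => hR₁ _ ((le_max_left _ _).trans (hyz i j)),
    fun i j hij => hR₁ _ ((le_max_left _ _).trans (hzz i j hij))⟩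

end FarPoints

def pairSum {α : Type*} [Dist α] (ℓ : ℝ → ℝ≥0∞) {N : ℕ} (x : Fin N → α) : ℝ≥0∞ :=
  ∑ i, ∑ j, if i < j then ℓ (dist (x i) (x j)) else 0

section PairSum

variable {α : Type*} [PseudoMetricSpace α] {ℓ : ℝ → ℝ≥0∞}

theorem pairSum_le {N : ℕ} (x : Fin N → α) {e : ℝ≥0∞}
    (h : ∀ i j, i < j → ℓ (dist (x i) (x j)) ≤ e) : pairSum ℓ x ≤ (N : ℝ≥0∞) ^ 2 * e := by
  simpa [pairSum, sq] using sum_sum_ite_le (fun i j : Fin N => i < j) h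

theorem pairSum_append_le {K L : ℕ} (y : Fin K → α) (z : Fin L → α) {e : ℝ≥0∞}
    (hyz : ∀ i j, ℓ (dist (y i) (z j)) ≤ e) (hzz : ∀ i j, i ≠ j → ℓ (dist (z i) (z j)) ≤ e) :
    pairSum ℓ (Fin.append y z) ≤ pairSum ℓ y + ((K + L : ℕ) : ℝ≥0∞) ^ 2 * e := by
  have hyz' := sum_sum_ite_le (fun (i : Fin K) (j : Fin L) => Fin.castAdd L i < Fin.natAdd K j)
    fun i j _ => hyz i j
  have hzy := sum_sum_ite_le (fun (i : Fin L) (j : Fin K) => Fin.natAdd K i < Fin.castAdd L j)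
    fun i j _ => (dist_comm (z i) (y j)).symm ▸ hyz j i
  have hzz' := sum_sum_ite_le (fun (i j : Fin L) => i < j) fun i j hij => hzz i j hij.ne
  simp only [Fintype.card_fin] at hyz' hzy hzz'
  calc pairSum ℓ (Fin.append y z) ≤ pairSum ℓ y + (K * L * e + L * K * e + L * L * e) := by
        rw [pairSum]
        simp only [Fin.sum_univ_add, Fin.append_left, Fin.append_right, Finset.sum_add_distrib,
          Fin.natAdd_lt_natAdd_iff, (Fin.strictMono_castAdd L).lt_iff_lt]
        grw [hyz', hzy, hzz', pairSum]
        exact le_of_eq (by ring)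
    _ ≤ pairSum ℓ y + ((K + L : ℕ) : ℝ≥0∞) ^ 2 * e := by
        gcongr pairSum ℓ y + ?_
        calc K * L * e + L * K * e + L * L * e ≤ K * K * e + (K * L * e + L * K * e + L * L * e) :=
              le_add_self
          _ = ((K + L : ℕ) : ℝ≥0∞) ^ 2 * e := by push_cast; ring

theorem sum_pairSum_comp_succAbove {N : ℕ} (x : Fin (N + 1) → α) :
    ∑ m : Fin (N + 1), pairSum ℓ (x ∘ m.succAbove) = (N - 1 : ℕ) * pairSum ℓ x := by
  simpa [pairSum] using
    Fin.sum_sum_succAbove (fun a b => if a < b then ℓ (dist (x a) (x b)) else 0) (by simp)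

theorem pairSum_comp_succAbove_ne_top {N : ℕ} {x : Fin (N + 1) → α} (hx : pairSum ℓ x ≠ ⊤)
    (m : Fin (N + 1)) :
    pairSum ℓ (x ∘ m.succAbove) ≠ ⊤ :=
  ne_top_of_le_ne_top (ENNReal.mul_ne_top (ENNReal.natCast_ne_top _) hx)
    (sum_pairSum_comp_succAbove (ℓ := ℓ) x ▸
      Finset.single_le_sum (fun _ _ => zero_le) (Finset.mem_univ m))

theorem sum_toReal_pairSum_comp_succAbove {N : ℕ} (hN : 1 ≤ N) {x : Fin (N + 1) → α}
    (hx : pairSum ℓ x ≠ ⊤) :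
    ∑ m : Fin (N + 1), (pairSum ℓ (x ∘ m.succAbove)).toReal = (N - 1) * (pairSum ℓ x).toReal := by
  rw [← ENNReal.toReal_sum fun m _ => pairSum_comp_succAbove_ne_top hx m,
    sum_pairSum_comp_succAbove, ENNReal.toReal_mul, ENNReal.toReal_natCast, Nat.cast_sub hN,
    Nat.cast_one]

end PairSum

section Functionals

variable {d : ℕ} {ℓ : ℝ → ℝ≥0∞} {N : ℕ}

theorem natCast_mul_sub_one_pos (hN : 2 ≤ N) : (0 : ℝ) < N * (N - 1) := by
  have : (2 : ℝ) ≤ N := by exact_mod_cast hN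
  nlinarith

theorem two_div_natCast_mul_sub_one_pos (hN : 2 ≤ N) : (0 : ℝ) < 2 / (N * (N - 1)) :=
  div_pos two_pos (natCast_mul_sub_one_pos hN)

theorem two_div_natCast_mul_sub_one_mul_sq_le_four (hN : 2 ≤ N) :
    2 / (N * (N - 1)) * (N : ℝ) ^ 2 ≤ 4 := by
  have : (2 : ℝ) ≤ N := by exact_mod_cast hN
  rw [div_mul_eq_mul_div, div_le_iff₀ (by nlinarith)]
  nlinarith

theorem pairCost_eq_ofReal_mul (hN : 2 ≤ N) (x : Fin N → EuclideanSpace ℝ (Fin d)) :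
    pairCost d ℓ N x = ENNReal.ofReal (2 / (N * (N - 1))) * pairSum ℓ x := by
  rw [pairCost, ENNReal.ofReal_div_of_pos (natCast_mul_sub_one_pos hN),
    ENNReal.ofReal_mul (Nat.cast_nonneg _),
    ENNReal.ofReal_sub _ zero_le_one, ENNReal.ofReal_natCast, ENNReal.ofReal_one,
    ENNReal.ofReal_ofNat]
  rfl

theorem pairCost_le_ofReal (hN : 2 ≤ N) {x : Fin N → EuclideanSpace ℝ (Fin d)} {s : ℝ}
    (h : pairSum ℓ x ≤ ENNReal.ofReal s) :
    pairCost d ℓ N x ≤ ENNReal.ofReal (2 / (N * (N - 1)) * s) := by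
  rw [pairCost_eq_ofReal_mul hN,
    ENNReal.ofReal_mul (two_div_natCast_mul_sub_one_pos hN).le]
  gcongr

theorem pairCost_eq_ofReal (hN : 2 ≤ N) {x : Fin N → EuclideanSpace ℝ (Fin d)}
    (hx : pairSum ℓ x ≠ ⊤) :
    pairCost d ℓ N x = ENNReal.ofReal (2 / (N * (N - 1)) * (pairSum ℓ x).toReal) := by
  rw [pairCost_eq_ofReal_mul hN, ENNReal.ofReal_mul (two_div_natCast_mul_sub_one_pos hN).le,
    ENNReal.ofReal_toReal hx]

theorem pairSum_ne_top (hN : 2 ≤ N) {x : Fin N → EuclideanSpace ℝ (Fin d)}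
    (hx : pairCost d ℓ N x ≠ ⊤) : pairSum ℓ x ≠ ⊤ := by
  rw [pairCost_eq_ofReal_mul hN] at hx
  exact (ENNReal.lt_top_of_mul_ne_top_right hx
    (ENNReal.ofReal_pos.2 (two_div_natCast_mul_sub_one_pos hN)).ne').ne

theorem le_SN {v : EuclideanSpace ℝ (Fin d) → ℝ} {x : Fin N → EuclideanSpace ℝ (Fin d)} {a : ℝ}
    (hN : 0 < N) (h : ∀ i, a ≤ v (x i)) : a ≤ SN d N v x := by
  rw [SN, le_div_iff₀ (by exact_mod_cast hN)]
  simpa [mul_comm] using Finset.card_nsmul_le_sum Finset.univ (fun i => v (x i)) a fun i _ => h i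

theorem SN_le {v : EuclideanSpace ℝ (Fin d) → ℝ} {x : Fin N → EuclideanSpace ℝ (Fin d)} {a : ℝ}
    (ha : 0 ≤ a) (h : ∀ i, v (x i) ≤ a) : SN d N v x ≤ a :=
  div_le_of_le_mul₀ (Nat.cast_nonneg _) ha <| by
    simpa [mul_comm] using Finset.sum_le_card_nsmul Finset.univ (fun i => v (x i)) a fun i _ => h i

theorem SN_le_norm (v : C₀(EuclideanSpace ℝ (Fin d), ℝ)) (x : Fin N → EuclideanSpace ℝ (Fin d)) :
    SN d N v x ≤ ‖v‖ :=
  SN_le (norm_nonneg v) fun i =>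
    (le_abs_self _).trans
      (ZeroAtInftyContinuousMap.norm_toBCF_eq_norm (f := v) ▸ v.toBCF.norm_coe_le_norm (x i))

theorem sum_SN_comp_succAbove (hN : N ≠ 0) (v : EuclideanSpace ℝ (Fin d) → ℝ)
    (x : Fin (N + 1) → EuclideanSpace ℝ (Fin d)) :
    ∑ m : Fin (N + 1), SN d N v (x ∘ m.succAbove) = (N + 1) * SN d (N + 1) v x := by
  have hsum : ∀ m : Fin (N + 1), ∑ i : Fin N, v (x (m.succAbove i)) = ∑ a, v (x a) - v (x m) :=
    fun m => by rw [Fin.sum_univ_succAbove (fun a => v (x a)) m]; ring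
  simp only [SN, Function.comp_apply, hsum, ← Finset.sum_div, Finset.sum_sub_distrib,
    Finset.sum_const, Finset.card_univ, Fintype.card_fin, nsmul_eq_mul]
  push_cast
  field_simp
  ring

theorem le_MN (v : EuclideanSpace ℝ (Fin d) → ℝ) (x : Fin N → EuclideanSpace ℝ (Fin d))
    {S c : ℝ} (hc : 0 ≤ c) (hS : S ≤ SN d N v x) (hcost : pairCost d ℓ N x ≤ ENNReal.ofReal c) :
    ((S - c : ℝ) : EReal) ≤ MN d ℓ N v := by
  rw [← EReal.coe_sub_coe_ennreal_ofReal S hc]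
  exact (EReal.sub_le_sub (EReal.coe_le_coe_iff.2 hS)
    (EReal.coe_ennreal_le_coe_ennreal_iff.2 hcost)).trans
    (le_iSup (fun x => ((SN d N v x : ℝ) : EReal) - (pairCost d ℓ N x : EReal)) x)

theorem MN_le_norm (v : C₀(EuclideanSpace ℝ (Fin d), ℝ)) : MN d ℓ N v ≤ ‖v‖ :=
  iSup_le fun x => (EReal.sub_le_sub le_rfl (EReal.coe_ennreal_nonneg _)).trans <| by
    simpa using SN_le_norm v x

-- Averaged over the `N + 1` ways of deleting one point, `S_N` and `c_N` of the remaining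
-- configurations equal `S_{N+1}` and `c_{N+1}`, so some deletion does at least as well.
theorem MN_succ_le (hN : 2 ≤ N) (v : EuclideanSpace ℝ (Fin d) → ℝ) :
    MN d ℓ (N + 1) v ≤ MN d ℓ N v := by
  refine iSup_le fun x => ?_
  by_cases hx : pairCost d ℓ (N + 1) x = ⊤
  · simp [hx]
  have hsum := pairSum_ne_top (by omega) hx
  have hsub := pairSum_comp_succAbove_ne_top hsum
  obtain ⟨m, -, hm⟩ := Finset.exists_le_of_sum_le Finset.univ_nonempty
    (f := fun _ => SN d (N + 1) v x - 2 / ((N + 1 : ℕ) * ((N + 1 : ℕ) - 1)) * (pairSum ℓ x).toReal)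
    (g := fun m : Fin (N + 1) => SN d N v (x ∘ m.succAbove) -
      2 / (N * (N - 1)) * (pairSum ℓ (x ∘ m.succAbove)).toReal) <| le_of_eq <| by
    rw [Finset.sum_sub_distrib, Finset.sum_sub_distrib, sum_SN_comp_succAbove (by omega),
      ← Finset.mul_sum _ _ (2 / (N * (N - 1) : ℝ)),
      sum_toReal_pairSum_comp_succAbove (by omega) hsum]
    obtain ⟨hN0, hN1⟩ := mul_ne_zero_iff.1 (natCast_mul_sub_one_pos hN).ne'
    simp only [Finset.sum_const, Finset.card_univ, Fintype.card_fin, nsmul_eq_mul]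
    push_cast
    rw [add_sub_cancel_right]
    field_simp
  rw [pairCost_eq_ofReal (by omega) hsum, EReal.coe_sub_coe_ennreal_ofReal _
    (mul_nonneg (two_div_natCast_mul_sub_one_pos (by omega)).le ENNReal.toReal_nonneg)]
  exact (EReal.coe_le_coe_iff.2 hm).trans (le_MN v _
    (mul_nonneg (two_div_natCast_mul_sub_one_pos hN).le ENNReal.toReal_nonneg) le_rfl
    (pairCost_eq_ofReal hN (hsub m)).le)

theorem MN_le_MN (hN : 2 ≤ N) {M : ℕ} (hNM : N ≤ M) (v : EuclideanSpace ℝ (Fin d) → ℝ) :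
    MN d ℓ M v ≤ MN d ℓ N v := by
  induction M, hNM using Nat.le_induction with
  | base => exact le_rfl
  | succ n hn ih => exact (MN_succ_le (hN.trans hn) v).trans ih

theorem MN_nonneg [NeZero d] (hℓ : Tendsto ℓ atTop (𝓝 0)) (v : C₀(EuclideanSpace ℝ (Fin d), ℝ))
    (hN : 2 ≤ N) : 0 ≤ MN d ℓ N v := by
  refine EReal.ge_of_forall_gt_iff_ge.1 fun r hr => ?_
  have hε : 0 < -r / 5 := by
    have : r < 0 := by exact_mod_cast hr
    linarith
  obtain ⟨x, hx, -, hxx⟩ := exists_far_config hℓ v (Fin.elim0 : Fin 0 → _) N hε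
  have hS : -(-r / 5) ≤ SN d N v x := le_SN (by omega) fun i => neg_le_of_abs_le (hx i)
  have hcost : pairCost d ℓ N x ≤ ENNReal.ofReal (4 * (-r / 5)) := by
    refine (pairCost_le_ofReal hN (s := N ^ 2 * (-r / 5)) ?_).trans (ENNReal.ofReal_le_ofReal ?_)
    · rw [ENNReal.ofReal_mul (by positivity), ENNReal.ofReal_pow (Nat.cast_nonneg _),
        ENNReal.ofReal_natCast]
      exact pairSum_le x fun i j hij => hxx i j hij.ne
    · rw [← mul_assoc]
      exact mul_le_mul_of_nonneg_right (two_div_natCast_mul_sub_one_mul_sq_le_four hN) hε.le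
  calc (r : EReal) = ((-(-r / 5) - 4 * (-r / 5) : ℝ) : EReal) := by congr 1; ring
    _ ≤ MN d ℓ N v := le_MN v x (by positivity) hS hcost

theorem Minf_le_MN (hN : 2 ≤ N) (v : EuclideanSpace ℝ (Fin d) → ℝ) : Minf d ℓ v ≤ MN d ℓ N v :=
  iInf₂_le N hN

theorem Minf_nonneg [NeZero d] (hℓ : Tendsto ℓ atTop (𝓝 0))
    (v : C₀(EuclideanSpace ℝ (Fin d), ℝ)) : 0 ≤ Minf d ℓ v :=
  le_iInf₂ fun _ hN => MN_nonneg hℓ v hN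

theorem exists_Minf_eq_coe [NeZero d] (hℓ : Tendsto ℓ atTop (𝓝 0))
    (v : C₀(EuclideanSpace ℝ (Fin d), ℝ)) : ∃ b : ℝ, Minf d ℓ v = b :=
  ⟨_, (EReal.coe_toReal
    (ne_top_of_le_ne_top (EReal.coe_ne_top ‖v‖) ((Minf_le_MN le_rfl v).trans (MN_le_norm v)))
    (ne_bot_of_le_ne_bot EReal.zero_ne_bot (Minf_nonneg hℓ v))).symm⟩

theorem le_SN_smul_append (w : C₀(EuclideanSpace ℝ (Fin d), ℝ)) {θ : ℝ} (hθ0 : 0 ≤ θ)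
    (hθ1 : θ ≤ 1) {K L : ℕ} (hK : 0 < K) (hKθ : (K : ℝ) ≤ θ * ↑(K + L))
    (hθK : θ * ↑(K + L) < K + 1) (y : Fin K → EuclideanSpace ℝ (Fin d))
    (z : Fin L → EuclideanSpace ℝ (Fin d)) {ε : ℝ} (hε : 0 ≤ ε) (hz : ∀ j, |w (z j)| ≤ ε) :
    θ ^ 2 * SN d K w y - ‖w‖ / ↑(K + L) - ε ≤ SN d (K + L) ⇑(θ • w) (Fin.append y z) := by
  have hN : (0 : ℝ) < ↑(K + L) := by positivity
  have hS := SN_le_norm w y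
  set S := SN d K w y
  have hsum : SN d (K + L) ⇑(θ • w) (Fin.append y z) * ↑(K + L) =
      θ * (K * S + ∑ j, w (z j)) := by
    simp only [SN, S, Fin.sum_univ_add, Fin.append_left, Fin.append_right,
      ZeroAtInftyContinuousMap.smul_apply, smul_eq_mul, ← Finset.mul_sum]
    field_simp
  have hz_sum : -(L * ε) ≤ ∑ j, w (z j) := by
    simpa using Finset.card_nsmul_le_sum Finset.univ (fun j => w (z j)) (-ε)
      fun j _ => neg_le_of_abs_le (hz j)
  have hrem : θ * S * (θ * ↑(K + L) - K) ≤ ‖w‖ := by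
    rcases le_or_gt 0 S with hS0 | hS0
    · calc θ * S * (θ * ↑(K + L) - K) ≤ 1 * S * 1 := by gcongr; linarith
        _ ≤ ‖w‖ := by linarith
    · exact (mul_nonpos_of_nonpos_of_nonneg (mul_nonpos_of_nonneg_of_nonpos hθ0 hS0.le)
        (by linarith)).trans (norm_nonneg w)
  have hL : θ * L * ε ≤ ↑(K + L) * ε := by
    gcongr
    calc θ * L ≤ 1 * L := by gcongr
      _ ≤ ↑(K + L) := by push_cast; linarith
  rw [eq_div_of_mul_eq hN.ne' hsum, le_div_iff₀ hN, sub_mul, sub_mul, div_mul_cancel₀ _ hN.ne']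
  nlinarith [mul_le_mul_of_nonneg_left hz_sum hθ0]

theorem pairCost_append_le {θ : ℝ} (hθ1 : θ ≤ 1) {K L : ℕ} (hK : 2 ≤ K)
    (hKθ : (K : ℝ) ≤ θ * ↑(K + L)) (y : Fin K → EuclideanSpace ℝ (Fin d))
    (z : Fin L → EuclideanSpace ℝ (Fin d)) (hy : pairCost d ℓ K y ≠ ⊤) {ε : ℝ} (hε : 0 ≤ ε)
    (hyz : ∀ i j, ℓ (dist (y i) (z j)) ≤ ENNReal.ofReal ε)
    (hzz : ∀ i j, i ≠ j → ℓ (dist (z i) (z j)) ≤ ENNReal.ofReal ε) :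
    pairCost d ℓ (K + L) (Fin.append y z) ≤
      ENNReal.ofReal (θ ^ 2 * (pairCost d ℓ K y).toReal + 4 * ε) := by
  have hy' := pairSum_ne_top hK hy
  set t := (pairSum ℓ y).toReal
  have hsum : pairSum ℓ (Fin.append y z) ≤ ENNReal.ofReal (t + ((K + L : ℕ) : ℝ) ^ 2 * ε) := by
    grw [pairSum_append_le y z hyz hzz]
    rw [ENNReal.ofReal_add ENNReal.toReal_nonneg (by positivity),
      ENNReal.ofReal_mul (by positivity),
      ENNReal.ofReal_pow (Nat.cast_nonneg _), ENNReal.ofReal_natCast, ENNReal.ofReal_toReal hy']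
  refine (pairCost_le_ofReal (by omega) hsum).trans (ENNReal.ofReal_le_ofReal ?_)
  have hKR : (2 : ℝ) ≤ K := by exact_mod_cast hK
  have hcoeff : 2 / (↑(K + L) * (↑(K + L) - 1)) ≤ θ ^ 2 * (2 / (K * (K - 1))) := by
    have hN : (2 : ℝ) ≤ ↑(K + L) := by push_cast; linarith [(Nat.cast_nonneg L : (0 : ℝ) ≤ L)]
    rw [← mul_div_assoc, div_le_div_iff₀ (by nlinarith) (by nlinarith)]
    have := mul_le_mul hKθ (show (K : ℝ) - 1 ≤ θ * (↑(K + L) - 1) by nlinarith) (by linarith)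
      (by linarith)
    nlinarith
  have hK1 : (0 : ℝ) ≤ 2 / (K * (K - 1)) := div_nonneg zero_le_two (by nlinarith)
  rw [pairCost_eq_ofReal hK hy', ENNReal.toReal_ofReal (mul_nonneg hK1 ENNReal.toReal_nonneg),
    mul_add]
  have := two_div_natCast_mul_sub_one_mul_sq_le_four (N := K + L) (by omega)
  push_cast at this hcoeff ⊢
  nlinarith [mul_le_mul_of_nonneg_right hcoeff (ENNReal.toReal_nonneg : 0 ≤ t),
    mul_le_mul_of_nonneg_right this hε]

theorem le_MN_smul_of_lt_MN [NeZero d] (hℓ : Tendsto ℓ atTop (𝓝 0))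
    (w : C₀(EuclideanSpace ℝ (Fin d), ℝ)) {θ : ℝ} (hθ0 : 0 ≤ θ) (hθ1 : θ ≤ 1) {K L : ℕ}
    (hK : 2 ≤ K) (hKθ : (K : ℝ) ≤ θ * ↑(K + L)) (hθK : θ * ↑(K + L) < K + 1) {b : ℝ}
    (hb : (b : EReal) < MN d ℓ K w) {ε : ℝ} (hε : 0 < ε) :
    ((θ ^ 2 * b - ‖w‖ / ↑(K + L) - ε : ℝ) : EReal) ≤ MN d ℓ (K + L) ⇑(θ • w) := by
  obtain ⟨y, hy⟩ := lt_iSup_iff.1 hb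
  have hcy : pairCost d ℓ K y ≠ ⊤ := by
    rintro h
    simp [h] at hy
  rw [← EReal.coe_ennreal_toReal hcy, ← EReal.coe_sub, EReal.coe_lt_coe_iff] at hy
  obtain ⟨z, hz, hyz, hzz⟩ := exists_far_config hℓ w y L (ε := ε / 5) (by positivity)
  have hS := le_SN_smul_append w hθ0 hθ1 (by omega) hKθ hθK y z (by positivity) hz
  have hc := pairCost_append_le hθ1 hK hKθ y z hcy (by positivity) hyz hzz
  refine le_trans (EReal.coe_le_coe_iff.2 ?_) (le_MN _ _ (by positivity) hS hc)
  nlinarith [mul_le_mul_of_nonneg_left hy.le (sq_nonneg θ)]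

theorem le_Minf_smul [NeZero d] (hℓ : Tendsto ℓ atTop (𝓝 0))
    (w : C₀(EuclideanSpace ℝ (Fin d), ℝ)) {θ : ℝ} (hθ0 : 0 < θ) (hθ1 : θ ≤ 1) {b : ℝ}
    (hb : (b : EReal) ≤ Minf d ℓ w) : ((θ ^ 2 * b : ℝ) : EReal) ≤ Minf d ℓ ⇑(θ • w) := by
  refine le_iInf₂ fun N hN => EReal.ge_of_forall_gt_iff_ge.1 fun r hr => ?_
  have hε : 0 < (θ ^ 2 * b - r) / 3 := by
    have : r < θ ^ 2 * b := by exact_mod_cast hr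
    linarith
  obtain ⟨n, hNn, hθn, hwn⟩ : ∃ n : ℕ, N ≤ n ∧ 2 ≤ θ * n ∧ ‖w‖ / n < (θ ^ 2 * b - r) / 3 :=
    ((eventually_ge_atTop N).and
      (((tendsto_natCast_atTop_atTop.const_mul_atTop hθ0).eventually_ge_atTop 2).and
        ((tendsto_const_div_atTop_nhds_zero_nat ‖w‖).eventually (gt_mem_nhds hε)))).exists
  set K := ⌊θ * n⌋₊
  have hK : 2 ≤ K := Nat.le_floor (by exact_mod_cast hθn)
  obtain ⟨L, hL⟩ := Nat.exists_eq_add_of_le (Nat.floor_le_of_le (a := θ * n) (n := n) (by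
    nlinarith [(Nat.cast_nonneg n : (0 : ℝ) ≤ n)]))
  have hKθ : (K : ℝ) ≤ θ * ↑(K + L) := by rw [← hL]; exact Nat.floor_le (by positivity)
  have hθK : θ * ↑(K + L) < K + 1 := by rw [← hL]; exact Nat.lt_floor_add_one _
  have hb' : ((b - (θ ^ 2 * b - r) / 3 : ℝ) : EReal) < MN d ℓ K w :=
    lt_of_lt_of_le (EReal.coe_lt_coe_iff.2 (by linarith)) (hb.trans (Minf_le_MN hK w))
  have hMN := le_MN_smul_of_lt_MN hℓ w hθ0.le hθ1 hK hKθ hθK hb' hε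
  rw [← hL] at hMN
  refine le_trans (EReal.coe_le_coe_iff.2 ?_) (hMN.trans (MN_le_MN hN hNn _))
  have hθ2 : θ ^ 2 ≤ 1 := by nlinarith
  nlinarith [mul_le_mul_of_nonneg_right hθ2 hε.le]

end Functionals

theorem statement_9_general (d : ℕ) (hd : 1 ≤ d) (ℓ : ℝ → ℝ≥0∞)
    (hl_decay : Filter.Tendsto ℓ Filter.atTop (nhds 0))
    (ρ : Measure (EuclideanSpace ℝ (Fin d)))
    (θ : ℝ) (hθ0 : 0 ≤ θ) (hθ1 : θ ≤ 1) :
    Cinf d ℓ (ENNReal.ofReal θ • ρ) ≤ ((θ ^ 2 : ℝ) : EReal) * Cinf d ℓ ρ := by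
  have : NeZero d := ⟨by omega⟩
  rcases hθ0.eq_or_lt with rfl | hθ
  · rw [ENNReal.ofReal_zero, zero_smul]
    calc Cinf d ℓ 0 ≤ 0 := iSup_le fun v => by simpa using Minf_nonneg hl_decay v
      _ = ((0 ^ 2 : ℝ) : EReal) * Cinf d ℓ ρ := by simp
  refine iSup_le fun v => ?_
  obtain ⟨w, rfl⟩ : ∃ w, v = θ • w := ⟨θ⁻¹ • v, (smul_inv_smul₀ hθ.ne' v).symm⟩
  obtain ⟨b, hb⟩ := exists_Minf_eq_coe hl_decay w
  have hint : ∫ x, (θ • w) x ∂(ENNReal.ofReal θ • ρ) = θ ^ 2 * ∫ x, w x ∂ρ := by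
    simp [integral_smul_measure, ENNReal.toReal_ofReal hθ0, integral_const_mul, sq, mul_assoc]
  calc ((∫ x, (θ • w) x ∂(ENNReal.ofReal θ • ρ) : ℝ) : EReal) - Minf d ℓ ⇑(θ • w)
      ≤ ((θ ^ 2 * ∫ x, w x ∂ρ : ℝ) : EReal) - ((θ ^ 2 * b : ℝ) : EReal) := by
        rw [hint]
        exact EReal.sub_le_sub le_rfl (le_Minf_smul hl_decay w hθ hθ1 hb.ge)
    _ = ((θ ^ 2 : ℝ) : EReal) * (((∫ x, w x ∂ρ : ℝ) : EReal) - Minf d ℓ w) := by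
        rw [hb, ← EReal.coe_sub, ← EReal.coe_sub, ← EReal.coe_mul, mul_sub]
    _ ≤ ((θ ^ 2 : ℝ) : EReal) * Cinf d ℓ ρ :=
        mul_le_mul_of_nonneg_left (le_iSup (fun u : C₀(EuclideanSpace ℝ (Fin d), ℝ) =>
          ((∫ x, u x ∂ρ : ℝ) : EReal) - Minf d ℓ u) w) (by exact_mod_cast sq_nonneg θ)

/-- `C_∞(θρ) ≤ θ² C_∞(ρ)` for probabilities `ρ` and `θ ∈ [0,1]`. -/
theorem statement_9 (d : ℕ) (hd : 1 ≤ d) (ℓ : ℝ → ℝ≥0∞)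
    (hl_lsc : LowerSemicontinuousOn ℓ (Set.Ici 0))
    (hl0 : 0 < ℓ 0)
    (hl_decay : Filter.Tendsto ℓ Filter.atTop (nhds 0))
    (ρ : Measure (EuclideanSpace ℝ (Fin d))) (hρ : IsProbabilityMeasure ρ)
    (θ : ℝ) (hθ0 : 0 ≤ θ) (hθ1 : θ ≤ 1) :
    Cinf d ℓ (ENNReal.ofReal θ • ρ) ≤ ((θ ^ 2 : ℝ) : EReal) * Cinf d ℓ ρ :=
  statement_9_general d hd ℓ hl_decay ρ θ hθ0 hθ1
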